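/- Let N ≥ 3, let φ_1,…,φ_N : ℝ×ℝ → ℝ be smooth functions and λ_{ij} : ℝ → ℝ functions of t such that −∂_x²φ_i = Σ_{j=1}^N λ_{ij}(t) φ_j for all 1 ≤ i ≤ N. Then at every (x,t): ∂_x²(Ŵ{N−1}) = −(Σ_{i=1}^N λ_{ii}(t)) · (Ŵ{N−1}) + 2 (Ŵ{N−3},N−1,N). -/

import Mathlib

/-- Partial derivative with respect to the first variable `x`. -/
noncomputable def px (f : ℝ × ℝ → ℝ) : ℝ × ℝ → ℝ :=
  fun p => deriv (fun x => f (x, p.2)) p.1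

/-- The determinant `(Φ^{(ord 0)}, Φ^{(ord 1)}, …, Φ^{(ord (N-1))})` whose `j`-th column is
the vector of `x`-derivatives of order `ord j` of `φ_1, …, φ_N`. -/
noncomputable def wdet (N : ℕ) (φ : Fin N → ℝ × ℝ → ℝ) (ord : Fin N → ℕ) (p : ℝ × ℝ) : ℝ :=
  Matrix.det (Matrix.of fun i j : Fin N => (px^[ord j] (φ i)) p)

lemma px_eq_fderiv {f : ℝ × ℝ → ℝ} (hf : ContDiff ℝ (⊤ : ℕ∞) f) :
    px f = fun p => fderiv ℝ f p (1, 0) := by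
  funext p
  have h1 : HasDerivAt (fun x : ℝ => (x, p.2)) ((1 : ℝ), (0 : ℝ)) p.1 :=
    (hasDerivAt_id p.1).prodMk (hasDerivAt_const p.1 p.2)
  have hd : HasDerivAt (fun x => f (x, p.2)) (fderiv ℝ f p (1, 0)) p.1 :=
    ((hf.differentiable (by simp)).differentiableAt.hasFDerivAt).comp_hasDerivAt p.1 h1
  exact hd.deriv

lemma hasDerivAt_px {f : ℝ × ℝ → ℝ} (hf : ContDiff ℝ (⊤ : ℕ∞) f) (p : ℝ × ℝ) :
    HasDerivAt (fun x => f (x, p.2)) (px f p) p.1 := by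
  have h1 : HasDerivAt (fun x : ℝ => (x, p.2)) ((1 : ℝ), (0 : ℝ)) p.1 :=
    (hasDerivAt_id p.1).prodMk (hasDerivAt_const p.1 p.2)
  have hd : HasDerivAt (fun x => f (x, p.2)) (fderiv ℝ f p (1, 0)) p.1 :=
    ((hf.differentiable (by simp)).differentiableAt.hasFDerivAt).comp_hasDerivAt p.1 h1
  show HasDerivAt _ (deriv (fun x => f (x, p.2)) p.1) _
  rw [hd.deriv]; exact hd

lemma contDiff_px {f : ℝ × ℝ → ℝ} (hf : ContDiff ℝ (⊤ : ℕ∞) f) : ContDiff ℝ (⊤ : ℕ∞) (px f) := by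
  rw [px_eq_fderiv hf]
  exact (hf.fderiv_right (by simp)).clm_apply contDiff_const

lemma contDiff_px_iter {f : ℝ × ℝ → ℝ} (hf : ContDiff ℝ (⊤ : ℕ∞) f) (k : ℕ) :
    ContDiff ℝ (⊤ : ℕ∞) (px^[k] f) := by
  induction k with
  | zero => exact hf
  | succ k ih => rw [Function.iterate_succ_apply']; exact contDiff_px ih

lemma hasDerivAt_det {N : ℕ} (g g' : Fin N → Fin N → ℝ → ℝ) (x : ℝ)
    (h : ∀ i j, HasDerivAt (fun y => g i j y) (g' i j x) x) :
    HasDerivAt (fun y => (Matrix.of fun i j => g i j y).det)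
      (∑ j, (Matrix.of fun i j' => if j' = j then g' i j' x else g i j' x).det) x := by
  have key : ∀ y, (Matrix.of fun i j => g i j y).det
      = ∑ σ : Equiv.Perm (Fin N), ((Equiv.Perm.sign σ : ℤ) : ℝ) * ∏ i, g (σ i) i y := by
    intro y
    rw [Matrix.det_apply]
    exact Finset.sum_congr rfl fun σ _ => by
      simp [Units.smul_def, zsmul_eq_mul, Matrix.of_apply]
  have hprod : ∀ σ : Equiv.Perm (Fin N), HasDerivAt (fun y => ∏ i, g (σ i) i y)
      (∑ j, (∏ i ∈ Finset.univ.erase j, g (σ i) i x) * g' (σ j) j x) x := by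
    intro σ
    have := HasDerivAt.fun_finsetProd (u := Finset.univ) (f := fun i y => g (σ i) i y)
      (f' := fun i => g' (σ i) i x) (x := x) (fun i _ => h (σ i) i)
    simpa [smul_eq_mul] using this
  have main : HasDerivAt
      (fun y => ∑ σ : Equiv.Perm (Fin N), ((Equiv.Perm.sign σ : ℤ) : ℝ) * ∏ i, g (σ i) i y)
      (∑ σ : Equiv.Perm (Fin N), ((Equiv.Perm.sign σ : ℤ) : ℝ) *
        ∑ j, (∏ i ∈ Finset.univ.erase j, g (σ i) i x) * g' (σ j) j x) x :=
    HasDerivAt.fun_sum fun σ _ => (hprod σ).const_mul _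
  have main2 : HasDerivAt (fun y => (Matrix.of fun i j => g i j y).det)
      (∑ σ : Equiv.Perm (Fin N), ((Equiv.Perm.sign σ : ℤ) : ℝ) *
        ∑ j, (∏ i ∈ Finset.univ.erase j, g (σ i) i x) * g' (σ j) j x) x := by
    simpa only [← key] using main
  convert main2 using 1
  calc ∑ j, (Matrix.of fun i j' => if j' = j then g' i j' x else g i j' x).det
      = ∑ j, ∑ σ : Equiv.Perm (Fin N), ((Equiv.Perm.sign σ : ℤ) : ℝ) *
          ∏ i, (if i = j then g' (σ i) i x else g (σ i) i x) := by
        refine Finset.sum_congr rfl fun j _ => ?_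
        rw [Matrix.det_apply]
        exact Finset.sum_congr rfl fun σ _ => by
          simp [Units.smul_def, zsmul_eq_mul, Matrix.of_apply]
    _ = ∑ σ : Equiv.Perm (Fin N), ∑ j, ((Equiv.Perm.sign σ : ℤ) : ℝ) *
          ∏ i, (if i = j then g' (σ i) i x else g (σ i) i x) := Finset.sum_comm
    _ = _ := by
        refine Finset.sum_congr rfl fun σ _ => ?_
        rw [Finset.mul_sum]
        refine Finset.sum_congr rfl fun j _ => ?_
        congr 1
        rw [← Finset.mul_prod_erase Finset.univ _ (Finset.mem_univ j), if_pos rfl, mul_comm]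
        congr 1
        exact Finset.prod_congr rfl fun i hi => by rw [if_neg (Finset.ne_of_mem_erase hi)]

lemma sum_det_update {N : ℕ} (A L : Matrix (Fin N) (Fin N) ℝ) :
    ∑ k, (A.updateCol k (fun i => ∑ j, L i j * A j k)).det = L.trace * A.det := by
  have hterm : ∀ k, (A.updateCol k (fun i => ∑ j, L i j * A j k)).det
      = ((A.adjugate * L) * A) k k := by
    intro k
    have hb : (fun i => ∑ j, L i j * A j k) = L.mulVec (fun j => A j k) := by
      funext i; simp [Matrix.mulVec, dotProduct]
    rw [← Matrix.cramer_apply, hb, Matrix.cramer_eq_adjugate_mulVec, Matrix.mulVec_mulVec]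
    simp only [Matrix.mulVec, dotProduct, Matrix.mul_apply]
  calc ∑ k, (A.updateCol k (fun i => ∑ j, L i j * A j k)).det
      = Matrix.trace (A.adjugate * L * A) := by
        rw [Matrix.trace]; exact Finset.sum_congr rfl fun k _ => (hterm k)
    _ = Matrix.trace (A * A.adjugate * L) := by rw [Matrix.trace_mul_cycle]
    _ = L.trace * A.det := by
        rw [Matrix.mul_adjugate, Matrix.smul_mul, Matrix.one_mul, Matrix.trace_smul]
        simp [mul_comm]

/-- Under `-∂ₓ²φ_i = ∑_j λ_{ij}(t) φ_j`, one has
`∂ₓ²(Ŵ{N−1}) = −(∑ᵢ λ_{ii}(t)) (Ŵ{N−1}) + 2 (Ŵ{N−3},N−1,N)`. -/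
theorem second_x_derivative_of_wronskian
    (N : ℕ) (hN : 3 ≤ N) (φ : Fin N → ℝ × ℝ → ℝ)
    (hφ : ∀ i, ContDiff ℝ (⊤ : ℕ∞) (φ i))
    (lam : Fin N → Fin N → ℝ → ℝ)
    (hcond : ∀ i, ∀ p : ℝ × ℝ, -((px^[2] (φ i)) p) = ∑ j, lam i j p.2 * φ j p) :
    ∀ p : ℝ × ℝ,
      (px^[2] (fun q => wdet N φ (fun j => (j : ℕ)) q)) p
        = -(∑ i, lam i i p.2) * wdet N φ (fun j => (j : ℕ)) p
          + 2 * wdet N φ (fun j => if (j : ℕ) < N - 2 then (j : ℕ) else (j : ℕ) + 1) p := by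
  intro p
  set ord2 : Fin N → ℕ := fun j => if (j : ℕ) < N - 2 then (j : ℕ) else (j : ℕ) + 1 with hord2
  set ord1 : Fin N → ℕ := fun j => if (j : ℕ) = N - 1 then N else (j : ℕ) with hord1
  set ordT : Fin N → ℕ := fun j => if (j : ℕ) = N - 1 then N + 1 else (j : ℕ) with hordT
  have hN2 : N - 2 < N := by omega
  have hN1 : N - 1 < N := by omega
  set a : Fin N := ⟨N - 2, hN2⟩ with ha
  set b : Fin N := ⟨N - 1, hN1⟩ with hb
  have hva : (a : ℕ) = N - 2 := rfl
  have hvb : (b : ℕ) = N - 1 := rfl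
  have hab : a ≠ b := by
    intro hc; have := congrArg Fin.val hc; omega
  have hF : ∀ (k : ℕ) i (q : ℝ × ℝ),
      HasDerivAt (fun x => px^[k] (φ i) (x, q.2)) (px^[k + 1] (φ i) q) q.1 := by
    intro k i q
    have := hasDerivAt_px (contDiff_px_iter (hφ i) k) q
    rw [Function.iterate_succ_apply']
    exact this
  -- generic derivative of a wdet in x
  have hWD : ∀ (ord : Fin N → ℕ) (q : ℝ × ℝ),
      HasDerivAt (fun x => wdet N φ ord (x, q.2))
        (∑ j, wdet N φ (fun j' => if j' = j then ord j' + 1 else ord j') q) q.1 := by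
    intro ord q
    have h := hasDerivAt_det (g := fun i j x => px^[ord j] (φ i) (x, q.2))
      (g' := fun i j x => px^[ord j + 1] (φ i) (x, q.2)) (x := q.1)
      (fun i j => hF (ord j) i q)
    have hval : ∑ j, wdet N φ (fun j' => if j' = j then ord j' + 1 else ord j') q
        = ∑ j : Fin N, (Matrix.of fun i j' => if j' = j then px^[ord j' + 1] (φ i) (q.1, q.2)
            else px^[ord j'] (φ i) (q.1, q.2)).det := by
      refine Finset.sum_congr rfl fun j _ => ?_
      unfold wdet
      congr 1
      funext i j'
      by_cases h' : j' = j <;> simp [h', Matrix.of_apply]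
    rw [hval]
    exact h
  -- determinant vanishes when two orders coincide
  have wdet_dup : ∀ (o : Fin N → ℕ) (c d : Fin N), c ≠ d → o c = o d → ∀ q,
      wdet N φ o q = 0 := by
    intro o c d hcd ho q
    exact Matrix.det_zero_of_column_eq hcd (fun i => by simp [Matrix.of_apply, ho])
  -- Step A : first derivative
  have hA : ∀ q : ℝ × ℝ,
      HasDerivAt (fun x => wdet N φ (fun j => (j : ℕ)) (x, q.2)) (wdet N φ ord1 q) q.1 := by
    intro q
    have h := hWD (fun j => (j : ℕ)) q
    have hsum : ∑ j, wdet N φ (fun j' => if j' = j then (j' : ℕ) + 1 else (j' : ℕ)) q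
        = wdet N φ ord1 q := by
      rw [Finset.sum_eq_single b]
      · have ho : (fun j' : Fin N => if j' = b then (j' : ℕ) + 1 else (j' : ℕ)) = ord1 := by
          funext j'
          have hlt := j'.isLt
          simp only [hord1, Fin.ext_iff, hvb]
          split_ifs <;> omega
        rw [ho]
      · intro j _ hjb
        have h2 : (j : ℕ) ≠ N - 1 := by
          intro hc; exact hjb (Fin.ext (hc.trans hvb.symm))
        have hjj : (j : ℕ) + 1 < N := by have := j.isLt; omega
        set j1 : Fin N := ⟨(j : ℕ) + 1, hjj⟩ with hj1
        have hvj1 : (j1 : ℕ) = (j : ℕ) + 1 := rfl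
        refine wdet_dup _ j j1 ?_ ?_ q
        · intro hc; have := congrArg Fin.val hc; omega
        · have hne : ¬(j1 = j) := by
            intro hc; have := congrArg Fin.val hc; omega
          simp [hne, hvj1]
      · intro hb'; exact absurd (Finset.mem_univ b) hb'
    rw [← hsum]
    exact h
  -- Step B : second derivative
  have hB : ∀ q : ℝ × ℝ,
      HasDerivAt (fun x => wdet N φ ord1 (x, q.2))
        (wdet N φ ord2 q + wdet N φ ordT q) q.1 := by
    intro q
    have h := hWD ord1 q
    set f : Fin N → ℝ := fun j => wdet N φ (fun j' => if j' = j then ord1 j' + 1 else ord1 j') q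
      with hf
    have hfa : f a = wdet N φ ord2 q := by
      show wdet N φ (fun j' => if j' = a then ord1 j' + 1 else ord1 j') q = _
      have ho : (fun j' : Fin N => if j' = a then ord1 j' + 1 else ord1 j') = ord2 := by
        funext j'
        have hlt := j'.isLt
        simp only [hord1, hord2, Fin.ext_iff, hva]
        split_ifs <;> omega
      rw [ho]
    have hfb : f b = wdet N φ ordT q := by
      show wdet N φ (fun j' => if j' = b then ord1 j' + 1 else ord1 j') q = _
      have ho : (fun j' : Fin N => if j' = b then ord1 j' + 1 else ord1 j') = ordT := by
        funext j'
        have hlt := j'.isLt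
        simp only [hord1, hordT, Fin.ext_iff, hvb]
        split_ifs <;> omega
      rw [ho]
    have hzero : ∀ j : Fin N, j ≠ a → j ≠ b → f j = 0 := by
      intro j hja hjb
      have h1 : (j : ℕ) ≠ N - 2 := fun hc => hja (Fin.ext (hc.trans hva.symm))
      have h2 : (j : ℕ) ≠ N - 1 := fun hc => hjb (Fin.ext (hc.trans hvb.symm))
      have h3 : (j : ℕ) < N - 2 := by have := j.isLt; omega
      have hjj : (j : ℕ) + 1 < N := by omega
      set j1 : Fin N := ⟨(j : ℕ) + 1, hjj⟩ with hj1
      have hvj1 : (j1 : ℕ) = (j : ℕ) + 1 := rfl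
      refine wdet_dup _ j j1 ?_ ?_ q
      · intro hc; have := congrArg Fin.val hc; omega
      · have hne : ¬(j1 = j) := by
          intro hc; have := congrArg Fin.val hc; omega
        simp only [if_pos rfl, if_true, eq_self_iff_true, if_neg hne, hord1, hvj1]
        split_ifs <;> omega
    have hsum : ∑ j, f j = wdet N φ ord2 q + wdet N φ ordT q := by
      have hrw : ∀ j : Fin N, f j = (if j = a then f a else 0) + (if j = b then f b else 0) := by
        intro j
        by_cases h1 : j = a
        · subst h1; rw [if_pos rfl, if_neg hab, add_zero]
        · by_cases h2 : j = b
          · subst h2; rw [if_neg h1, if_pos rfl, zero_add]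
          · rw [if_neg h1, if_neg h2, hzero j h1 h2, add_zero]
      rw [Finset.sum_congr rfl fun j _ => hrw j, Finset.sum_add_distrib,
        Finset.sum_ite_eq' Finset.univ a, Finset.sum_ite_eq' Finset.univ b]
      simp [hfa, hfb]
    rw [← hsum]
    exact h
  -- iterated condition
  have hiter : ∀ (k : ℕ) i (q : ℝ × ℝ),
      px^[k + 2] (φ i) q = -∑ j, lam i j q.2 * px^[k] (φ j) q := by
    intro k i
    induction k with
    | zero =>
      intro q
      have h := hcond i q
      simp only [Function.iterate_zero_apply]
      linarith [h]
    | succ k ih =>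
      intro q
      have hfun : px^[k + 2] (φ i) = fun r => -∑ j, lam i j r.2 * px^[k] (φ j) r :=
        funext ih
      have hstep : px^[k + 1 + 2] (φ i) q = px (px^[k + 2] (φ i)) q := by
        rw [show k + 1 + 2 = (k + 2) + 1 by omega, Function.iterate_succ_apply']
      rw [hstep, hfun]
      have hd : HasDerivAt (fun x => -∑ j, lam i j q.2 * px^[k] (φ j) (x, q.2))
          (-∑ j, lam i j q.2 * px^[k + 1] (φ j) q) q.1 :=
        (HasDerivAt.fun_sum fun j _ => (hF k j q).const_mul (lam i j q.2)).neg
      exact hd.deriv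
  -- Step C : the trace identity
  set A : Matrix (Fin N) (Fin N) ℝ := Matrix.of fun i j => px^[(j : ℕ)] (φ i) p with hAdef
  set L : Matrix (Fin N) (Fin N) ℝ := Matrix.of fun i j => lam i j p.2 with hLdef
  have hTr := sum_det_update A L
  have hterm : ∀ k : Fin N, (A.updateCol k (fun i => ∑ j, L i j * A j k)).det
      = -wdet N φ (fun j' => if j' = k then (k : ℕ) + 2 else (j' : ℕ)) p := by
    intro k
    have hcol : (fun i => ∑ j, L i j * A j k)
        = (-1 : ℝ) • (fun i => px^[(k : ℕ) + 2] (φ i) p) := by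
      funext i
      have hit := hiter (k : ℕ) i p
      simp only [hLdef, hAdef, Matrix.of_apply, Pi.smul_apply, smul_eq_mul]
      linarith [hit]
    rw [hcol, Matrix.det_updateCol_smul]
    have hupd : (A.updateCol k (fun i => px^[(k : ℕ) + 2] (φ i) p))
        = Matrix.of fun i j' => px^[if j' = k then (k : ℕ) + 2 else (j' : ℕ)] (φ i) p := by
      ext i j'
      rw [Matrix.updateCol_apply]
      by_cases h' : j' = k <;> simp [h', hAdef]
    rw [hupd]
    unfold wdet
    ring
  have htermzero : ∀ k : Fin N, k ≠ a → k ≠ b →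
      (A.updateCol k (fun i => ∑ j, L i j * A j k)).det = 0 := by
    intro k hka hkb
    rw [hterm k]
    have h1 : (k : ℕ) ≠ N - 2 := fun hc => hka (Fin.ext (hc.trans hva.symm))
    have h2 : (k : ℕ) ≠ N - 1 := fun hc => hkb (Fin.ext (hc.trans hvb.symm))
    have h3 : (k : ℕ) + 2 < N := by have := k.isLt; omega
    set k2 : Fin N := ⟨(k : ℕ) + 2, h3⟩ with hk2
    have hvk2 : (k2 : ℕ) = (k : ℕ) + 2 := rfl
    have hz : wdet N φ (fun j' => if j' = k then (k : ℕ) + 2 else (j' : ℕ)) p = 0 := by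
      refine wdet_dup _ k k2 ?_ ?_ p
      · intro hc; have := congrArg Fin.val hc; omega
      · have hne : ¬(k2 = k) := by
          intro hc; have := congrArg Fin.val hc; omega
        simp [hne, hvk2]
    rw [hz]; ring
  have hterma : (A.updateCol a (fun i => ∑ j, L i j * A j a)).det = wdet N φ ord2 p := by
    rw [hterm a]
    have hswap : wdet N φ (fun j' => if j' = a then (a : ℕ) + 2 else (j' : ℕ)) p
        = -wdet N φ ord2 p := by
      have hperm := Matrix.det_permute' (Equiv.swap a b)
        (Matrix.of fun i j => px^[ord2 j] (φ i) p)
      have hM : ((Matrix.of fun i j => px^[ord2 j] (φ i) p).submatrix id (Equiv.swap a b))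
          = Matrix.of fun i j' => px^[if j' = a then (a : ℕ) + 2 else (j' : ℕ)] (φ i) p := by
        ext i j'
        simp only [Matrix.submatrix_apply, Matrix.of_apply, id]
        have hlt := j'.isLt
        have hoo : ord2 (Equiv.swap a b j') = (if j' = a then (a : ℕ) + 2 else (j' : ℕ)) := by
          by_cases h1 : j' = a
          · subst h1
            rw [Equiv.swap_apply_left, if_pos rfl]
            simp only [hord2, hva, hvb]
            split_ifs <;> omega
          · by_cases h2 : j' = b
            · subst h2
              rw [Equiv.swap_apply_right, if_neg (Ne.symm hab)]
              simp only [hord2, hva, hvb]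
              split_ifs <;> omega
            · rw [Equiv.swap_apply_of_ne_of_ne h1 h2, if_neg h1]
              have hja : (j' : ℕ) ≠ N - 2 := fun hc => h1 (Fin.ext (hc.trans hva.symm))
              have hjb : (j' : ℕ) ≠ N - 1 := fun hc => h2 (Fin.ext (hc.trans hvb.symm))
              simp only [hord2]
              split_ifs <;> omega
        rw [hoo]
      rw [hM] at hperm
      have hsign : Equiv.Perm.sign (Equiv.swap a b) = -1 := Equiv.Perm.sign_swap hab
      unfold wdet
      rw [hperm, hsign]
      push_cast
      ring
    rw [hswap]; ring
  have htermb : (A.updateCol b (fun i => ∑ j, L i j * A j b)).det = -wdet N φ ordT p := by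
    rw [hterm b]
    have ho : (fun j' : Fin N => if j' = b then (b : ℕ) + 2 else (j' : ℕ)) = ordT := by
      funext j'
      have hlt := j'.isLt
      simp only [hordT, Fin.ext_iff, hvb]
      split_ifs <;> omega
    rw [ho]
  have hTr2 : wdet N φ ord2 p - wdet N φ ordT p
      = (∑ i, lam i i p.2) * wdet N φ (fun j => (j : ℕ)) p := by
    have hsum : ∑ k, (A.updateCol k (fun i => ∑ j, L i j * A j k)).det
        = wdet N φ ord2 p - wdet N φ ordT p := by
      have hrw : ∀ k : Fin N, (A.updateCol k (fun i => ∑ j, L i j * A j k)).det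
          = (if k = a then wdet N φ ord2 p else 0)
            + (if k = b then -wdet N φ ordT p else 0) := by
        intro k
        by_cases h1 : k = a
        · subst h1; rw [if_pos rfl, if_neg hab, add_zero, hterma]
        · by_cases h2 : k = b
          · subst h2; rw [if_neg h1, if_pos rfl, zero_add, htermb]
          · rw [if_neg h1, if_neg h2, htermzero k h1 h2, add_zero]
      rw [Finset.sum_congr rfl fun k _ => hrw k, Finset.sum_add_distrib,
        Finset.sum_ite_eq' Finset.univ a, Finset.sum_ite_eq' Finset.univ b]
      simp only [Finset.mem_univ, if_pos]
      ring
    have htr : L.trace = ∑ i, lam i i p.2 := by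
      simp [Matrix.trace, Matrix.diag, hLdef]
    have hWA : A.det = wdet N φ (fun j => (j : ℕ)) p := rfl
    rw [hsum, htr, hWA] at hTr
    exact hTr
  -- final assembly
  have hpx1 : px (fun q => wdet N φ (fun j => (j : ℕ)) q) = fun q => wdet N φ ord1 q :=
    funext fun q => (hA q).deriv
  show px (px (fun q => wdet N φ (fun j => (j : ℕ)) q)) p = _
  rw [hpx1]
  have hlast : px (fun q => wdet N φ ord1 q) p = wdet N φ ord2 p + wdet N φ ordT p :=
    (hB p).deriv
  rw [hlast]
  have hT : wdet N φ ordT p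
      = wdet N φ ord2 p - (∑ i, lam i i p.2) * wdet N φ (fun j => (j : ℕ)) p := by
    linarith [hTr2]
  rw [hT]
  ring
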